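/- arXiv:2006.05879 — 5 statements merged into one kernel-verified Lean document; each statement's English description precedes it below -/
import Mathlib

section
/- Let A be a finite set with at least two elements, and let U, L : A → ℝ with L a ≤ U a for all a. Define b ∈ A to minimize a ↦ (max over a' ≠ a of U a') - L a, define c ∈ A \ {b} to maximize U over A \ {b}, and define π ∈ {b, c} to maximize a ↦ U a - L a over {b, c}. Then U c - L b ≤ U π - L π. -/
/-!
If `U c ≤ U b`, then `U c - L b` is at most the width of `b`. Otherwise `c` maximizes `U` on all
of `A`, so the sup of `U` off `c` is at most the sup of `U` off `b`; the minimality of `b` then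
gives `L c ≤ L b`, so `U c - L b` is at most the width of `c`. Either way the width of `π` wins.
-/

namespace Real

variable {ι : Type*} {f : ι → ℝ} {s t : Set ι}

theorem le_biSup_of_finite [Finite ι] {c : ι} (hc : c ∈ t) : f c ≤ ⨆ a ∈ t, f a :=
  le_ciSup₂ (f := fun a (_ : a ∈ t) => f a)
    (Set.finite_iUnion fun _ => Set.finite_range _).bddAbove c hc

/-- In `ℝ` the empty supremum `⨆ _ : b ∈ t, f b` is `0`: a point off `t` contributes `0`. -/
theorem biSup_nonneg_of_notMem {b : ι} (hb : b ∉ t) : 0 ≤ ⨆ a ∈ t, f a :=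
  iSup_nonneg' ⟨b, by rw [ciSup_neg hb, Real.sSup_empty]⟩

theorem biSup_le_biSup_of_forall_le [Finite ι] {b c : ι} (hb : b ∉ t) (hc : c ∈ t)
    (h : ∀ a ∈ s, f a ≤ f c) : ⨆ a ∈ s, f a ≤ ⨆ a ∈ t, f a :=
  Real.iSup_le (fun a => Real.iSup_le (fun ha => (h a ha).trans (le_biSup_of_finite hc))
    (biSup_nonneg_of_notMem hb)) (biSup_nonneg_of_notMem hb)

end Real

theorem ugape_first_property_general
    {A : Type*} [Fintype A]
    (U L : A → ℝ)
    (b c π : A)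
    (hb : ∀ a : A, (⨆ a' ∈ ({a' | a' ≠ b} : Set A), U a') - L b ≤
          (⨆ a' ∈ ({a' | a' ≠ a} : Set A), U a') - L a)
    (hc : c ≠ b) (hcmax : ∀ a, a ≠ b → U a ≤ U c)
    (hπmax : ∀ a, a = b ∨ a = c → U a - L a ≤ U π - L π) :
    U c - L b ≤ U π - L π := by
  rcases le_or_gt (U c) (U b) with hcb | hbc
  · linarith [hπmax b (.inl rfl)]
  · have hc_argmax (a : A) : U a ≤ U c := by
      rcases eq_or_ne a b with rfl | hab
      exacts [hbc.le, hcmax a hab]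
    have hsup : (⨆ a' ∈ ({a' | a' ≠ c} : Set A), U a') ≤
        ⨆ a' ∈ ({a' | a' ≠ b} : Set A), U a' :=
      Real.biSup_le_biSup_of_forall_le (not_not.2 rfl) hc fun a _ => hc_argmax a
    have hL : L c ≤ L b := by linarith [hb c]
    linarith [hπmax c (.inr rfl)]

/-- UGapE first property: U c - L b ≤ U π - L π. -/
theorem ugape_first_property
    {A : Type*} [Fintype A] (hcard : 2 ≤ Fintype.card A)
    (U L : A → ℝ) (hUL : ∀ a, L a ≤ U a)
    (b c π : A)
    (hb : ∀ a : A, (⨆ a' ∈ ({a' | a' ≠ b} : Set A), U a') - L b ≤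
          (⨆ a' ∈ ({a' | a' ≠ a} : Set A), U a') - L a)
    (hc : c ≠ b) (hcmax : ∀ a, a ≠ b → U a ≤ U c)
    (hπ : π = b ∨ π = c)
    (hπmax : ∀ a, a = b ∨ a = c → U a - L a ≤ U π - L π) :
    U c - L b ≤ U π - L π :=
  ugape_first_property_general U L b c π hb hc hcmax hπmax
end

section
/- Let A be a finite set with at least two elements, U, L : A → ℝ, and ε ≥ 0. Define b, c, π as in the UGapE rule: b minimizes a ↦ (max_{a'≠a} U a') - L a, c maximizes U over A \ {b}, and π ∈ {b,c} maximizes U - L on {b,c}. If U c - L b > ε, then U b - L c < 2 (U π - L π) - ε. -/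
theorem ugape_second_property_general
    {A : Type*}
    (U L : A → ℝ) (ε : ℝ)
    (b c π : A)
    (hπmax : ∀ a, a = b ∨ a = c → U a - L a ≤ U π - L π)
    (hstop : U c - L b > ε) :
    U b - L c < 2 * (U π - L π) - ε := by
  have hb := hπmax b (Or.inl rfl)
  have hc := hπmax c (Or.inr rfl)
  calc U b - L c = (U b - L b) + (U c - L c) - (U c - L b) := by ring
    _ < 2 * (U π - L π) - ε := by linarith

/-- UGapE second property: if the stopping rule has not triggered,
    U b - L c < 2 (U π - L π) - ε. -/
theorem ugape_second_property
    {A : Type*} [Fintype A] (hcard : 2 ≤ Fintype.card A)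
    (U L : A → ℝ) (ε : ℝ) (hε : 0 ≤ ε)
    (b c π : A)
    (hb : ∀ a : A, (⨆ a' ∈ ({a' | a' ≠ b} : Set A), U a') - L b ≤
          (⨆ a' ∈ ({a' | a' ≠ a} : Set A), U a') - L a)
    (hc : c ≠ b) (hcmax : ∀ a, a ≠ b → U a ≤ U c)
    (hπ : π = b ∨ π = c)
    (hπmax : ∀ a, a = b ∨ a = c → U a - L a ≤ U π - L π)
    (hstop : U c - L b > ε) :
    U b - L c < 2 * (U π - L π) - ε :=
  ugape_second_property_general U L ε b c π hπmax hstop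
end

section
/- Let A be a finite set with at least two elements, U, L : A → ℝ, ε ≥ 0, and define b, c, π by the UGapE rule (b minimizes a ↦ (max_{a'≠a} U a') - L a; c maximizes U over A \ {b}; π ∈ {b,c} maximizes U - L). If U c - L b > ε, then for every pair a, a' ∈ {b, c}, U a - L a' ≤ 2 (U π - L π). -/
/-!
Write `S a = ⨆ a' ≠ a, U a'` and `D a = U a - L a`. Since `c ≠ b`, the value `U c` enters
`S b`, so the UGapE choice of `b` gives `U c - L b ≤ S b - L b ≤ S c - L c`, and
`S c ≤ max (S b) (U b)`. If `S c ≤ S b` this forces `L c ≤ L b`, so `U c - L b ≤ D c`; otherwise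
`U c - L b ≤ U b - L c`, and averaging the two gives `U c - L b ≤ (D b + D c) / 2`. Either way
`U c - L b ≤ D π`, the stopping condition makes `U c - L b` nonnegative, and the four combinations follow from
`U b - L c = D b + D c - (U c - L b)`.
-/

section FiniteSupremum

variable {A : Type*} [Finite A] (f : A → ℝ)

theorem le_iSup_mem_of_mem {s : Set A} {a : A} (ha : a ∈ s) : f a ≤ ⨆ x ∈ s, f x :=
  Finite.le_ciSup_of_le a (ciSup_pos (f := fun _ => f a) ha).ge

-- The term at `b` is a supremum over the empty type `b ∈ s`, which is `0` in `ℝ`.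
theorem iSup_mem_nonneg_of_notMem {s : Set A} {b : A} (hb : b ∉ s) : 0 ≤ ⨆ x ∈ s, f x :=
  Finite.le_ciSup_of_le b (by simp [hb])

theorem iSup_mem_le_max_iSup_ne (s : Set A) (b : A) :
    ⨆ x ∈ s, f x ≤ max (⨆ x ∈ ({x | x ≠ b} : Set A), f x) (f b) := by
  have hmax_nonneg : 0 ≤ max (⨆ x ∈ ({x | x ≠ b} : Set A), f x) (f b) :=
    le_max_of_le_left (iSup_mem_nonneg_of_notMem f (b := b) (fun h => h rfl))
  refine Real.iSup_le (fun x => Real.iSup_le (fun _ => ?_) hmax_nonneg) hmax_nonneg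
  by_cases hx : x = b
  · exact hx ▸ le_max_right _ _
  · exact le_max_of_le_left (le_iSup_mem_of_mem f (s := {x | x ≠ b}) hx)

end FiniteSupremum

theorem ugape_gap_le_max_diam {A : Type*} [Finite A] (U L : A → ℝ) {b c : A}
    (hb : (⨆ a' ∈ ({a' | a' ≠ b} : Set A), U a') - L b ≤
      (⨆ a' ∈ ({a' | a' ≠ c} : Set A), U a') - L c)
    (hc : c ≠ b) :
    U c - L b ≤ max (U b - L b) (U c - L c) := by
  have hUc : U c ≤ ⨆ a' ∈ ({a' | a' ≠ b} : Set A), U a' := le_iSup_mem_of_mem U hc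
  rcases le_max_iff.1 (iSup_mem_le_max_iSup_ne U {a' | a' ≠ c} b) with hSc | hSc
  · exact le_max_of_le_right (by linarith)
  · by_contra! hlt
    linarith [max_lt_iff.1 hlt]

theorem ugape_corollary_general
    {A : Type*} [Fintype A]
    (U L : A → ℝ) (ε : ℝ) (hε : 0 ≤ ε)
    (b c π : A)
    (hb : ∀ a : A, (⨆ a' ∈ ({a' | a' ≠ b} : Set A), U a') - L b ≤
          (⨆ a' ∈ ({a' | a' ≠ a} : Set A), U a') - L a)
    (hc : c ≠ b)
    (hπmax : ∀ a, a = b ∨ a = c → U a - L a ≤ U π - L π)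
    (hstop : U c - L b > ε) :
    ∀ a a' : A, a ∈ ({b, c} : Set A) → a' ∈ ({b, c} : Set A) →
      U a - L a' ≤ 2 * (U π - L π) := by
  have hDb := hπmax b (.inl rfl)
  have hDc := hπmax c (.inr rfl)
  have hgap : U c - L b ≤ U π - L π :=
    (ugape_gap_le_max_diam U L (hb c) hc).trans (max_le hDb hDc)
  intro a a' ha ha'
  rcases ha with rfl | rfl <;> rcases ha' with rfl | rfl <;> linarith

/-- Corollary of the UGapE properties: all four combinations of upper/lower
    confidence bounds of b and c are bounded by twice the diameter of π. -/
theorem ugape_corollary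
    {A : Type*} [Fintype A] (hcard : 2 ≤ Fintype.card A)
    (U L : A → ℝ) (ε : ℝ) (hε : 0 ≤ ε)
    (b c π : A)
    (hb : ∀ a : A, (⨆ a' ∈ ({a' | a' ≠ b} : Set A), U a') - L b ≤
          (⨆ a' ∈ ({a' | a' ≠ a} : Set A), U a') - L a)
    (hc : c ≠ b) (hcmax : ∀ a, a ≠ b → U a ≤ U c)
    (hπ : π = b ∨ π = c)
    (hπmax : ∀ a, a = b ∨ a = c → U a - L a ≤ U π - L π)
    (hstop : U c - L b > ε) :
    ∀ a a' : A, a ∈ ({b, c} : Set A) → a' ∈ ({b, c} : Set A) →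
      U a - L a' ≤ 2 * (U π - L π) :=
  ugape_corollary_general U L ε hε b c π hb hc hπmax hstop
end

section
/- Let β : ℝ → ℝ be non-decreasing with β(0) ≥ 1, such that x ↦ √(β(x)/x) is non-increasing on [1, ∞). Let n, n̄, β_cnt be reals with n̄ ≥ 0, 1 ≤ β_cnt ≤ β(0), and n ≥ (1/2) n̄ - β_cnt. If β_cnt ≤ n̄/4, then min(√(β(n)/n), 1) ≤ 2 √(β(n̄) / max(n̄, 1)). -/
/-!
Since `n ≥ n̄/2 - β_cnt ≥ n̄/4 ≥ 1`, the antitonicity of `√(β x / x)` bounds `√(β n / n)` by its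
value at `n̄/4`; monotonicity of `β` then trades `β (n̄/4)` for `β n̄`, and the factor `4` in the
denominator leaves the constant `√4 = 2`.
-/

lemma sqrt_div_le_sqrt_mul_sqrt_div {β : ℝ → ℝ} (hβmono : Monotone β)
    (hβdec : AntitoneOn (fun x => Real.sqrt (β x / x)) (Set.Ici 1))
    {c m n : ℝ} (hc : 1 ≤ c) (hm : 1 ≤ m / c) (hn : m / c ≤ n) :
    Real.sqrt (β n / n) ≤ Real.sqrt c * Real.sqrt (β m / m) := by
  have hc0 : 0 < c := by linarith
  have hm0 : 0 < m := (div_pos_iff_of_pos_right hc0).1 (by linarith)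
  calc Real.sqrt (β n / n)
      ≤ Real.sqrt (β (m / c) / (m / c)) := hβdec (Set.mem_Ici.2 hm) (Set.mem_Ici.2 (hm.trans hn)) hn
    _ ≤ Real.sqrt (β m / (m / c)) := by
        gcongr
        exact hβmono (div_le_self hm0.le hc)
    _ = Real.sqrt c * Real.sqrt (β m / m) := by
        rw [← Real.sqrt_mul hc0.le, div_div_eq_mul_div, mul_comm, mul_div_assoc]

theorem technicalCounts_first_case_general
    (β : ℝ → ℝ) (hβmono : Monotone β)
    (hβdec : AntitoneOn (fun x => Real.sqrt (β x / x)) (Set.Ici 1))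
    (n nbar βcnt : ℝ)
    (hβcnt1 : 1 ≤ βcnt)
    (hn : n ≥ (1 / 2) * nbar - βcnt)
    (hcase : βcnt ≤ nbar / 4) :
    min (Real.sqrt (β n / n)) 1 ≤ 2 * Real.sqrt (β nbar / max nbar 1) := by
  have hmax : max nbar 1 = nbar := max_eq_left (by linarith)
  have hsqrt4 : Real.sqrt 4 = 2 := by
    rw [show (4 : ℝ) = 2 ^ 2 by norm_num, Real.sqrt_sq zero_le_two]
  calc min (Real.sqrt (β n / n)) 1
      ≤ Real.sqrt (β n / n) := min_le_left _ _
    _ ≤ Real.sqrt 4 * Real.sqrt (β nbar / nbar) :=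
        sqrt_div_le_sqrt_mul_sqrt_div hβmono hβdec (by norm_num) (by linarith) (by linarith)
    _ = 2 * Real.sqrt (β nbar / max nbar 1) := by rw [hsqrt4, hmax]

/-- First case of Lemma technicalCounts. -/
theorem technicalCounts_first_case
    (β : ℝ → ℝ) (hβmono : Monotone β) (hβ0 : 1 ≤ β 0)
    (hβdec : AntitoneOn (fun x => Real.sqrt (β x / x)) (Set.Ici 1))
    (n nbar βcnt : ℝ) (hnbar : 0 ≤ nbar)
    (hβcnt1 : 1 ≤ βcnt) (hβcnt2 : βcnt ≤ β 0)
    (hn : n ≥ (1 / 2) * nbar - βcnt)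
    (hcase : βcnt ≤ nbar / 4) :
    min (Real.sqrt (β n / n)) 1 ≤ 2 * Real.sqrt (β nbar / max nbar 1) :=
  technicalCounts_first_case_general β hβmono hβdec n nbar βcnt hβcnt1 hn hcase
end

section
/- Let β : ℝ → ℝ be non-decreasing with β(0) ≥ 1 and with x ↦ √(β(x)/x) non-increasing on [1, ∞). Let n, n̄ ≥ 0 and 1 ≤ β_cnt ≤ β(0) satisfy n ≥ (1/2) n̄ - β_cnt. Then min(√(β(n)/n), 1) ≤ 2 √(β(n̄) / max(n̄, 1)) (with the convention that √(β(n)/n) = +∞, i.e. the min equals 1, when n = 0). -/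
/-!
If `β_cnt ≤ n̄/4`, then `n ≥ n̄/4 ≥ 1`, and since `√(β x / x)` is non-increasing while `β` is
non-decreasing, `√(β n / n) ≤ √(β (n̄/4) / (n̄/4)) ≤ √(β n̄ / (n̄/4)) = 2 √(β n̄ / n̄)`.
Otherwise `max n̄ 1 < 4 β_cnt ≤ 4 β n̄`, so the right-hand side is at least `1`, which bounds
the clipped width.
-/

open Real

lemma sqrt_div_div_four (x y : ℝ) : √(x / (y / 4)) = 2 * √(x / y) := by
  rw [show x / (y / 4) = 4 * (x / y) by ring, sqrt_mul (by norm_num),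
    show (4 : ℝ) = 2 ^ 2 by norm_num, sqrt_sq (by norm_num)]

lemma one_half_le_sqrt_div {a b : ℝ} (hb : 0 < b) (hba : b ≤ 4 * a) : 1 / 2 ≤ √(a / b) := by
  rw [le_sqrt (by norm_num) (div_nonneg (by linarith) hb.le), le_div_iff₀ hb]
  linarith

lemma sqrt_div_le_sqrt_div_of_antitoneOn {β : ℝ → ℝ} (hβmono : Monotone β)
    (hβdec : AntitoneOn (fun x => √(β x / x)) (Set.Ici 1))
    {a b x : ℝ} (ha : 1 ≤ a) (hax : a ≤ x) (hab : a ≤ b) : √(β x / x) ≤ √(β b / a) :=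
  calc √(β x / x) ≤ √(β a / a) := hβdec ha (ha.trans hax) hax
    _ ≤ √(β b / a) := sqrt_le_sqrt (by gcongr; exact hβmono hab)

theorem technicalCounts_general
    (β : ℝ → ℝ) (hβmono : Monotone β)
    (hβdec : AntitoneOn (fun x => Real.sqrt (β x / x)) (Set.Ici 1))
    (n nbar βcnt : ℝ) (hnbar : 0 ≤ nbar)
    (hβcnt1 : 1 ≤ βcnt) (hβcnt2 : βcnt ≤ β 0)
    (hn : n ≥ (1 / 2) * nbar - βcnt) :
    (if n = 0 then 1 else min (Real.sqrt (β n / n)) 1) ≤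
      2 * Real.sqrt (β nbar / max nbar 1) := by
  rcases le_or_gt βcnt (nbar / 4) with hsmall | hlarge
  · rw [if_neg (by linarith), max_eq_left (by linarith), ← sqrt_div_div_four]
    exact (min_le_left _ _).trans
      (sqrt_div_le_sqrt_div_of_antitoneOn hβmono hβdec (by linarith) (by linarith) (by linarith))
  · have hclip : (if n = 0 then 1 else min √(β n / n) 1) ≤ 1 := by
      split_ifs
      exacts [le_rfl, min_le_right _ _]
    have hβnbar : β 0 ≤ β nbar := hβmono hnbar
    have hhalf : 1 / 2 ≤ √(β nbar / max nbar 1) :=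
      one_half_le_sqrt_div (by positivity) (max_le (by linarith) (by linarith))
    linarith

/-- Full statement of Lemma technicalCounts (with the convention that the clipped
    width equals 1 when n = 0). -/
theorem technicalCounts
    (β : ℝ → ℝ) (hβmono : Monotone β) (hβ0 : 1 ≤ β 0)
    (hβdec : AntitoneOn (fun x => Real.sqrt (β x / x)) (Set.Ici 1))
    (n nbar βcnt : ℝ) (hn0 : 0 ≤ n) (hnbar : 0 ≤ nbar)
    (hβcnt1 : 1 ≤ βcnt) (hβcnt2 : βcnt ≤ β 0)
    (hn : n ≥ (1 / 2) * nbar - βcnt) :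
    (if n = 0 then 1 else min (Real.sqrt (β n / n)) 1) ≤
      2 * Real.sqrt (β nbar / max nbar 1) :=
  technicalCounts_general β hβmono hβdec n nbar βcnt hnbar hβcnt1 hβcnt2 hn
end
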